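/- arXiv:2007.03963 — 6 statements merged into one kernel-verified Lean document; each statement's English description precedes it below -/
import Mathlib

section
/- For every vector α ∈ F^n one has Ψ(T(α)) = σ(Ψ(α)); that is, the diagram intertwining the conjucyclic shift on F^n with the cyclic shift on K^{2n} via Ψ commutes. -/
/-- The map `Ψ : F^n → K^{2n}`,
`Ψ(α₀,…,α_{n−1}) = (Tr(βα₀),…,Tr(βα_{n−1}), Tr(β̄α₀),…,Tr(β̄α_{n−1}))`, where `β̄ = β^q`. -/
def Psi (q n : ℕ) {K F : Type*} [Field K] [Field F] (Tr : F → K) (β : F)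
    (α : Fin n → F) : Fin (2 * n) → K :=
  fun i =>
    if h : (i : ℕ) < n then Tr (β * α ⟨(i : ℕ), h⟩)
    else Tr (β ^ q * α ⟨(i : ℕ) - n, by have := i.isLt; omega⟩)

/-- The conjucyclic shift `T : F^n → F^n`, `T(c₀,…,c_{n−1}) = (c̄_{n−1}, c₀,…,c_{n−2})`
with `c̄ = c^q`. -/
def Tshift (q n : ℕ) {F : Type*} [Field F] (c : Fin n → F) : Fin n → F :=
  fun i =>
    if _h : (i : ℕ) = 0 then (c ⟨n - 1, by have := i.isLt; omega⟩) ^ q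
    else c ⟨(i : ℕ) - 1, by have := i.isLt; omega⟩

/-- The (right) cyclic shift `σ : K^m → K^m`, `σ(v₀,…,v_{m−1}) = (v_{m−1}, v₀,…,v_{m−2})`. -/
def cycShift (m : ℕ) {K : Type*} (v : Fin m → K) : Fin m → K :=
  fun i =>
    if _h : (i : ℕ) = 0 then v ⟨m - 1, by have := i.isLt; omega⟩
    else v ⟨(i : ℕ) - 1, by have := i.isLt; omega⟩

/-- With `K = 𝔽_q ⊆ F = 𝔽_{q²}`, `Tr(x) = x + x^q`, `β` a primitive element of
`F` and `n ≥ 1`: for every vector `α ∈ F^n`, `Ψ(T(α)) = σ(Ψ(α))`; i.e. `Ψ` intertwines the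
conjucyclic shift on `F^n` with the cyclic shift on `K^{2n}`. -/
theorem stmt3 (q n : ℕ) (hn : 0 < n) {K F : Type*} [Field K] [Fintype K] [Field F] [Fintype F]
    [Algebra K F] (hK : Fintype.card K = q) (hF : Fintype.card F = q ^ 2)
    (β : F) (hβ : ∀ x : F, x ≠ 0 → ∃ k : ℕ, x = β ^ k)
    (Tr : F → K) (hTr : ∀ x : F, algebraMap K F (Tr x) = x + x ^ q) :
    ∀ α : Fin n → F, Psi q n Tr β (Tshift q n α) = cycShift (2 * n) (Psi q n Tr β α) := by
  have hinj : Function.Injective (algebraMap K F) := (algebraMap K F).injective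
  have hq2 : ∀ x : F, (x ^ q) ^ q = x := by
    intro x
    have h := FiniteField.pow_card x
    rw [hF] at h
    rw [← pow_mul, ← sq, h]
  have hTrq : ∀ x : F, Tr (x ^ q) = Tr x := by
    intro x
    apply hinj
    rw [hTr, hTr, hq2 x, add_comm]
  have key1 : ∀ x : F, Tr (β * x ^ q) = Tr (β ^ q * x) := by
    intro x
    have h : β * x ^ q = (β ^ q * x) ^ q := by rw [mul_pow, hq2]
    rw [h, hTrq]
  have key2 : ∀ x : F, Tr (β ^ q * x ^ q) = Tr (β * x) := by
    intro x
    have h : β ^ q * x ^ q = (β * x) ^ q := by rw [mul_pow]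
    rw [h, hTrq]
  intro α
  funext i
  have hi := i.isLt
  simp only [Psi, Tshift, cycShift, Fin.val_mk]
  split_ifs with h1 h2 h3 h4 h5 h6 <;> try omega
  · simp only [show 2 * n - 1 - n = n - 1 from by omega]
    exact key1 _
  · rfl
  · simp only [show (i : ℕ) - 1 = n - 1 from by omega]
    exact key2 _
  · simp only [show (i : ℕ) - n - 1 = (i : ℕ) - 1 - n from by omega]
end

section
/- Let C ⊆ F^n be a K-linear subspace. Then C is an 𝔽_q-linear additive conjucyclic code (i.e. T(C) ⊆ C) if and only if its image D = Ψ(C) ⊆ K^{2n} is a q-ary linear cyclic code of length 2n (i.e. σ(D) ⊆ D). -/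
/-! Since `x ↦ x ^ q` is the Frobenius of `F` over `K`, the trace is `K`-linear, hence so is `Ψ`.
`Ψ` is injective: the coordinates `Tr (β a)` and `Tr (β̄ a)` determine `a` as soon as
`β ^ 2 ≠ β̄ ^ 2`, which holds because `β` has order `q ^ 2 - 1 > 2 q - 2`. Finally
`Ψ ∘ T = σ ∘ Ψ`, by `Tr (β c̄) = Tr (β̄ c)` and `Tr (β̄ c̄) = Tr (β c)`. So `Ψ` is a `K`-linear
isomorphism of `C` onto `Ψ(C)` intertwining `T` and `σ`, and invariance transfers both ways. -/

section

variable {K F : Type*} [Field K] [Field F] {q : ℕ} {Tr : F → K}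

theorem isLinearMap_of_algebraMap_eq_add [Algebra K F] (φ : F →ₗ[K] F)
    (hTr : ∀ x : F, algebraMap K F (Tr x) = x + φ x) : IsLinearMap K Tr where
  map_add x y := (algebraMap K F).injective <| by
    rw [map_add, hTr, hTr, hTr, map_add]; ring
  map_smul k x := (algebraMap K F).injective <| by
    rw [hTr, map_smul, smul_eq_mul, map_mul, hTr, Algebra.smul_def, Algebra.smul_def]; ring

theorem trace_mul_pow_comm [Algebra K F] (hTr : ∀ x : F, algebraMap K F (Tr x) = x + x ^ q)
    (hinv : ∀ x : F, (x ^ q) ^ q = x) (a x : F) : Tr (a * x ^ q) = Tr (a ^ q * x) :=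
  (algebraMap K F).injective <| by rw [hTr, hTr, mul_pow, mul_pow, hinv, hinv]; ring

theorem eq_of_trace_mul_eq [Algebra K F] (hTr : ∀ x : F, algebraMap K F (Tr x) = x + x ^ q)
    {β : F} (hβ : (β ^ q) ^ q = β) (hβ2 : β ^ 2 ≠ (β ^ q) ^ 2) {a b : F}
    (h₁ : Tr (β * a) = Tr (β * b)) (h₂ : Tr (β ^ q * a) = Tr (β ^ q * b)) : a = b := by
  have e₁ := congrArg (algebraMap K F) h₁
  have e₂ := congrArg (algebraMap K F) h₂
  simp only [hTr, mul_pow, hβ] at e₁ e₂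
  have : (β ^ 2 - (β ^ q) ^ 2) * (a - b) = 0 := by linear_combination β * e₁ - β ^ q * e₂
  simpa [sub_eq_zero, hβ2] using this

variable (n : ℕ) (β : F)

theorem Psi_isLinearMap [Algebra K F] (hTr : IsLinearMap K Tr) :
    IsLinearMap K (Psi q n Tr β) where
  map_add α α' := funext fun i => by
    simp only [Psi, Pi.add_apply]; split_ifs <;> simp only [mul_add, hTr.map_add]
  map_smul k α := funext fun i => by
    simp only [Psi, Pi.smul_apply]; split_ifs <;> simp only [mul_smul_comm, hTr.map_smul]

theorem Psi_injective [Algebra K F] (hTr : ∀ x : F, algebraMap K F (Tr x) = x + x ^ q)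
    (hβ : (β ^ q) ^ q = β) (hβ2 : β ^ 2 ≠ (β ^ q) ^ 2) : Function.Injective (Psi q n Tr β) := by
  intro α α' h
  funext j
  refine eq_of_trace_mul_eq hTr hβ hβ2 ?_ ?_
  · simpa [Psi] using congrFun h ⟨j, by omega⟩
  · simpa [Psi] using congrFun h ⟨j + n, by omega⟩

theorem Psi_Tshift (htr : ∀ a x : F, Tr (a * x ^ q) = Tr (a ^ q * x)) (hβ : (β ^ q) ^ q = β) :
    Function.Semiconj (Psi q n Tr β) (Tshift q n) (cycShift (2 * n)) := by
  intro c
  funext ⟨i, hi⟩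
  simp only [Psi, Tshift, cycShift]
  -- Only at the wrap-around entries `0` and `n` does a conjugate `c̄_{n-1}` occur;
  -- there `htr` and `hβ` move the conjugation onto `β`.
  split_ifs <;> first
    | omega
    | rfl
    | ((try simp only [htr, hβ]); congr 2; exact congrArg c (Fin.mk.inj_iff.2 (by omega)))

end

theorem isPrimitiveRoot_of_forall_eq_pow {F : Type*} [Field F] [Fintype F] {β : F}
    (hF : 2 < Fintype.card F) (hβ : ∀ x : F, x ≠ 0 → ∃ k : ℕ, x = β ^ k) :
    IsPrimitiveRoot β (Fintype.card F - 1) := by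
  classical
  have hβ0 : β ≠ 0 := by
    rintro rfl
    have hsub : (Finset.univ : Finset F) ⊆ {0, 1} := fun x _ => by
      by_cases hx : x = 0
      · simp [hx]
      · obtain ⟨_ | k, rfl⟩ := hβ x hx <;> simp
    have := (Finset.card_le_card hsub).trans Finset.card_le_two
    rw [Finset.card_univ] at this
    omega
  have hord := orderOf_units (y := Units.mk0 β hβ0)
  rw [Units.val_mk0] at hord
  rw [IsPrimitiveRoot.iff_orderOf, hord, orderOf_eq_card_of_forall_mem_powers,
    Nat.card_units, Nat.card_eq_fintype_card]
  intro u
  obtain ⟨k, hk⟩ := hβ u u.ne_zero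
  exact ⟨k, Units.ext (by simp [hk])⟩

theorem IsPrimitiveRoot.sq_ne_sq_pow {F : Type*} [Field F] {β : F} {q : ℕ}
    (hβ : IsPrimitiveRoot β (q ^ 2 - 1)) (hq : 2 ≤ q) : β ^ 2 ≠ (β ^ q) ^ 2 := by
  have hq2 : 2 * q ≤ q ^ 2 := by rw [sq]; exact Nat.mul_le_mul_right q hq
  intro h
  apply hβ.pow_ne_one_of_pos_of_lt (l := 2 * q - 2) (by omega) (by omega)
  apply mul_left_cancel₀ (pow_ne_zero 2 (hβ.ne_zero (by omega)))
  rw [← pow_add, mul_one, h, ← pow_mul]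
  congr 1
  omega

theorem Submodule.invariant_iff_exists_image_invariant {R M N : Type*} [Semiring R]
    [AddCommMonoid M] [AddCommMonoid N] [Module R M] [Module R N] (f : M →ₗ[R] N)
    (hf : Function.Injective f) {T : M → M} {S : N → N} (hfTS : Function.Semiconj f T S)
    (C : Submodule R M) :
    (∀ c ∈ C, T c ∈ C) ↔ ∃ D : Submodule R N, (D : Set N) = f '' C ∧ ∀ d ∈ D, S d ∈ D := by
  have hD : ∀ D : Submodule R N, (D : Set N) = f '' C ↔ D = C.map f := fun D => by
    rw [← Submodule.map_coe, SetLike.coe_set_eq]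
  simp only [hD, exists_eq_left, Submodule.mem_map, forall_exists_index, and_imp]
  constructor
  · rintro hT _ c hc rfl
    exact ⟨T c, hT c hc, hfTS c⟩
  · intro hS c hc
    obtain ⟨c', hc', hc'c⟩ := hS _ c hc rfl
    rwa [← hf (hc'c.trans (hfTS c).symm)]

theorem stmt4_general (q n : ℕ) {K F : Type*} [Field K] [Fintype K] [Field F] [Fintype F]
    [Algebra K F] (hK : Fintype.card K = q) (hF : Fintype.card F = q ^ 2)
    (β : F) (hβ : ∀ x : F, x ≠ 0 → ∃ k : ℕ, x = β ^ k)
    (Tr : F → K) (hTr : ∀ x : F, algebraMap K F (Tr x) = x + x ^ q)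
    (C : Submodule K (Fin n → F)) :
    (∀ c ∈ C, Tshift q n c ∈ C) ↔
      ∃ D : Submodule K (Fin (2 * n) → K),
        (D : Set (Fin (2 * n) → K)) = Psi q n Tr β '' (C : Set (Fin n → F)) ∧
        ∀ d ∈ D, cycShift (2 * n) d ∈ D := by
  subst hK
  have hq : 2 ≤ Fintype.card K := Fintype.one_lt_card
  have hinv : ∀ x : F, (x ^ Fintype.card K) ^ Fintype.card K = x := fun x => by
    rw [← pow_mul, ← sq, ← hF, FiniteField.pow_card]
  have hprim := isPrimitiveRoot_of_forall_eq_pow (by rw [hF]; nlinarith) hβ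
  rw [hF] at hprim
  have hPsi := Psi_isLinearMap (q := Fintype.card K) n β
    (isLinearMap_of_algebraMap_eq_add (FiniteField.frobeniusAlgHom K F).toLinearMap hTr)
  exact Submodule.invariant_iff_exists_image_invariant (hPsi.mk' _)
    (Psi_injective n β hTr (hinv β) (hprim.sq_ne_sq_pow hq))
    (Psi_Tshift n β (trace_mul_pow_comm hTr hinv) (hinv β)) C

/-- Let `C ⊆ F^n` be a `K`-linear subspace.  Then `C` is an `𝔽_q`-linear
additive conjucyclic code (i.e. `T(C) ⊆ C`) if and only if its image `D = Ψ(C) ⊆ K^{2n}` is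
a `q`-ary linear cyclic code of length `2n` (a `K`-subspace with `σ(D) ⊆ D`). -/
theorem stmt4 (q n : ℕ) (hn : 0 < n) {K F : Type*} [Field K] [Fintype K] [Field F] [Fintype F]
    [Algebra K F] (hK : Fintype.card K = q) (hF : Fintype.card F = q ^ 2)
    (β : F) (hβ : ∀ x : F, x ≠ 0 → ∃ k : ℕ, x = β ^ k)
    (Tr : F → K) (hTr : ∀ x : F, algebraMap K F (Tr x) = x + x ^ q)
    (C : Submodule K (Fin n → F)) :
    (∀ c ∈ C, Tshift q n c ∈ C) ↔
      ∃ D : Submodule K (Fin (2 * n) → K),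
        (D : Set (Fin (2 * n) → K)) = Psi q n Tr β '' (C : Set (Fin n → F)) ∧
        ∀ d ∈ D, cycShift (2 * n) d ∈ D :=
  stmt4_general q n hK hF β hβ Tr hTr C
end

section
/- For every vector u ∈ F^n, the Hamming weight of u equals the symplectic weight of Ψ(u), i.e. w_h(u) = w_s(Ψ(u)); consequently, for any 𝔽_q-linear additive conjucyclic code C ⊆ F^n, the minimum Hamming weight of C equals the minimum symplectic weight of Ψ(C). -/
/-- The Hamming weight of a vector: the number of nonzero coordinates. -/
noncomputable def hamWt {n : ℕ} {F : Type*} [Field F] (u : Fin n → F) : ℕ :=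
  Nat.card {i : Fin n // u i ≠ 0}

/-- The symplectic weight of a vector `v ∈ K^{2n}`: the number of indices `0 ≤ i ≤ n−1`
with `(v_i, v_{n+i}) ≠ (0,0)`. -/
noncomputable def sympWt (n : ℕ) {K : Type*} [Field K] (v : Fin (2 * n) → K) : ℕ :=
  Nat.card {i : Fin n //
    v ⟨(i : ℕ), by have := i.isLt; omega⟩ ≠ 0 ∨
    v ⟨n + (i : ℕ), by have := i.isLt; omega⟩ ≠ 0}

/-- For every `u ∈ F^n` one has `w_h(u) = w_s(Ψ(u))`; consequently, for any
`𝔽_q`-linear additive conjucyclic code `C ⊆ F^n` (a `K`-subspace with `T(C) ⊆ C`), the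
minimum Hamming weight of `C` equals the minimum symplectic weight of `Ψ(C)`. -/
theorem stmt5 (q n : ℕ) (hn : 0 < n) {K F : Type*} [Field K] [Fintype K] [Field F] [Fintype F]
    [Algebra K F] (hK : Fintype.card K = q) (hF : Fintype.card F = q ^ 2)
    (β : F) (hβ : ∀ x : F, x ≠ 0 → ∃ k : ℕ, x = β ^ k)
    (Tr : F → K) (hTr : ∀ x : F, algebraMap K F (Tr x) = x + x ^ q)
    (C : Submodule K (Fin n → F)) (hC : ∀ c ∈ C, Tshift q n c ∈ C) :
    (∀ u : Fin n → F, hamWt u = sympWt n (Psi q n Tr β u)) ∧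
      sInf (hamWt '' (C : Set (Fin n → F))) =
        sInf (sympWt n '' (Psi q n Tr β '' (C : Set (Fin n → F)))) := by
  classical
  have hq2 : 2 ≤ q := by rw [← hK]; exact Fintype.one_lt_card
  have hq0 : q ≠ 0 := by omega
  have hinj : Function.Injective (algebraMap K F) := (algebraMap K F).injective
  have hTr0 : ∀ x : F, Tr x = 0 ↔ x + x ^ q = 0 := by
    intro x
    constructor
    · intro h; rw [← hTr, h, map_zero]
    · intro h; apply hinj; rw [hTr, h, map_zero]
  have hβ0 : β ≠ 0 := by
    intro h
    have hsub : (Finset.univ : Finset F) ⊆ {0, 1} := by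
      intro x _
      rcases eq_or_ne x 0 with hx | hx
      · simp [hx]
      · obtain ⟨k, hk⟩ := hβ x hx
        subst h
        cases k with
        | zero => simp [hk]
        | succ m => rw [zero_pow (Nat.succ_ne_zero m)] at hk; exact absurd hk hx
    have hcard : Fintype.card F ≤ 2 := by
      calc Fintype.card F = (Finset.univ : Finset F).card := rfl
        _ ≤ ({0, 1} : Finset F).card := Finset.card_le_card hsub
        _ ≤ 2 := Finset.card_insert_le 0 {1} |>.trans (by simp)
    rw [hF, pow_two] at hcard
    nlinarith
  -- Key lemma: a nonzero coordinate cannot have both traces zero.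
  have key : ∀ α : F, α ≠ 0 → ¬(Tr (β * α) = 0 ∧ Tr (β ^ q * α) = 0) := by
    rintro α hα ⟨h1, h2⟩
    rw [hTr0] at h1 h2
    have hFq : β ^ (q * q) = β := by
      have h := FiniteField.pow_card β
      rwa [hF, pow_two] at h
    have h1' : β * α + β ^ q * α ^ q = 0 := by rw [mul_pow] at h1; exact h1
    have h2' : β ^ q * α + β * α ^ q = 0 := by
      rw [mul_pow, ← pow_mul, hFq] at h2; exact h2
    have e3 : β ^ (2 * q) * α = β ^ 2 * α := by
      linear_combination β ^ q * h2' - β * h1'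
    have e4 : β ^ (2 * q) = β ^ 2 := mul_right_cancel₀ hα e3
    have e5 : β ^ 2 * β ^ (2 * q - 2) = β ^ 2 * 1 := by
      rw [mul_one, ← pow_add]
      rw [show 2 + (2 * q - 2) = 2 * q by omega]
      exact e4
    have hβm : β ^ (2 * q - 2) = 1 := mul_left_cancel₀ (pow_ne_zero 2 hβ0) e5
    -- cardinality contradiction: all q² − 1 nonzero elements are among β^0,…,β^{2q−3}
    set m := 2 * q - 2 with hm
    have hmpos : 0 < m := by omega
    have hsub : (Finset.univ.filter (fun x : F => x ≠ 0)) ⊆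
        (Finset.range m).image (fun k => β ^ k) := by
      intro x hx
      rw [Finset.mem_filter] at hx
      obtain ⟨k, hk⟩ := hβ x hx.2
      refine Finset.mem_image.mpr ⟨k % m, Finset.mem_range.mpr (Nat.mod_lt _ hmpos), ?_⟩
      rw [hk]
      conv_rhs => rw [← Nat.mod_add_div k m]
      rw [pow_add, pow_mul, hβm, one_pow, mul_one]
    have hcard1 : (Finset.univ.filter (fun x : F => x ≠ 0)).card = Fintype.card F - 1 := by
      rw [Finset.filter_ne', Finset.card_erase_of_mem (Finset.mem_univ 0), Finset.card_univ]
    have hcard2 : (Finset.univ.filter (fun x : F => x ≠ 0)).card ≤ m :=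
      (Finset.card_le_card hsub).trans
        ((Finset.card_image_le).trans (by rw [Finset.card_range]))
    rw [hcard1, hF, pow_two, hm] at hcard2
    have hqq : 2 * q ≤ q * q := Nat.mul_le_mul_right q hq2
    omega
  have hiff : ∀ α : F, α ≠ 0 ↔ (Tr (β * α) ≠ 0 ∨ Tr (β ^ q * α) ≠ 0) := by
    intro α
    constructor
    · intro hα
      by_contra h
      push_neg at h
      exact key α hα ⟨h.1, h.2⟩
    · rintro h rfl
      have h0 : Tr (0 : F) = 0 := by rw [hTr0]; simp [zero_pow hq0]
      simp [mul_zero, h0] at h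
  have main : ∀ u : Fin n → F, hamWt u = sympWt n (Psi q n Tr β u) := by
    intro u
    unfold hamWt sympWt
    apply Nat.card_congr
    apply Equiv.subtypeEquivRight
    intro i
    have hP1 : Psi q n Tr β u ⟨(i : ℕ), by have := i.isLt; omega⟩ = Tr (β * u i) := by
      simp only [Psi, Fin.val_mk, dif_pos i.isLt, Fin.eta]
    have hP2 : Psi q n Tr β u ⟨n + (i : ℕ), by have := i.isLt; omega⟩ =
        Tr (β ^ q * u i) := by
      simp only [Psi, Fin.val_mk]
      rw [dif_neg (by omega)]
      have hidx : n + (i : ℕ) - n = (i : ℕ) := by omega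
      simp only [hidx, Fin.eta]
    rw [hP1, hP2]
    exact hiff (u i)
  refine ⟨main, ?_⟩
  have himg : sympWt n '' (Psi q n Tr β '' (C : Set (Fin n → F))) =
      hamWt '' (C : Set (Fin n → F)) := by
    rw [Set.image_image]
    exact Set.image_congr fun u _ => (main u).symm
  rw [himg]
end

section
/- For every vector c ∈ F^n, all coordinates of c lie in the subfield K (i.e. c_i^q = c_i for all 0 ≤ i ≤ n−1) if and only if the vector d = Ψ(c) ∈ K^{2n} satisfies d_i = d_{n+i} for all 0 ≤ i ≤ n−1. Consequently, for an 𝔽_q-linear additive conjucyclic code C with D = Ψ(C), the image Ψ(H(C)) of the largest q-ary cyclic code H(C) = {c ∈ C : c_i^q = c_i for all i} contained in C is exactly the set of codewords d ∈ D with d_i = d_{n+i} for all 0 ≤ i ≤ n−1. -/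
lemma Psi_left (q n : ℕ) {K F : Type*} [Field K] [Field F] (Tr : F → K) (β : F)
    (c : Fin n → F) (i : Fin n) (h : (i : ℕ) < 2 * n) :
    Psi q n Tr β c ⟨(i : ℕ), h⟩ = Tr (β * c i) := by
  simp [Psi, i.isLt]

lemma Psi_right (q n : ℕ) {K F : Type*} [Field K] [Field F] (Tr : F → K) (β : F)
    (c : Fin n → F) (i : Fin n) (h : n + (i : ℕ) < 2 * n) :
    Psi q n Tr β c ⟨n + (i : ℕ), h⟩ = Tr (β ^ q * c i) := by
  have h1 : ¬ (n + (i : ℕ) < n) := by omega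
  simp only [Psi, dif_neg h1]
  have e : (⟨n + (i : ℕ) - n, by have := i.isLt; omega⟩ : Fin n) = i := by
    ext; simp
  rw [e]

lemma beta_pow_ne (q : ℕ) {K F : Type*} [Field K] [Fintype K] [Field F] [Fintype F]
    [Algebra K F] (hK : Fintype.card K = q) (hF : Fintype.card F = q ^ 2)
    (β : F) (hβ : ∀ x : F, x ≠ 0 → ∃ k : ℕ, x = β ^ k) : β ^ q ≠ β := by
  intro h
  classical
  have hq2 : 2 ≤ q := hK ▸ Fintype.one_lt_card
  have hall : ∀ x : F, x ^ q = x := by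
    intro x
    by_cases hx : x = 0
    · simp [hx, zero_pow (by omega : q ≠ 0)]
    · obtain ⟨k, rfl⟩ := hβ x hx
      rw [← pow_mul, mul_comm, pow_mul, h]
  set p : Polynomial F := Polynomial.X ^ q - Polynomial.X with hp
  have hdeg : p.natDegree = q := by
    rw [hp]
    rw [Polynomial.natDegree_sub_eq_left_of_natDegree_lt]
    · exact Polynomial.natDegree_X_pow q
    · rw [Polynomial.natDegree_X, Polynomial.natDegree_X_pow]; omega
  have hp0 : p ≠ 0 := fun h0 => by simp [h0] at hdeg; omega
  have hroot : ∀ x : F, x ∈ p.roots := by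
    intro x
    rw [Polynomial.mem_roots hp0]
    simp [Polynomial.IsRoot, hp, hall x]
  have hsub : (Finset.univ : Finset F) ⊆ p.roots.toFinset := fun x _ =>
    Multiset.mem_toFinset.2 (hroot x)
  have h1 : Fintype.card F ≤ p.roots.toFinset.card := by
    simpa using Finset.card_le_card hsub
  have h2 : p.roots.toFinset.card ≤ Multiset.card p.roots := Multiset.toFinset_card_le _
  have h3 : Multiset.card p.roots ≤ q := hdeg ▸ p.card_roots'
  rw [hF] at h1
  nlinarith

/-- For every `c ∈ F^n`, all coordinates of `c` lie in the subfield `K`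
(i.e. `c_i^q = c_i` for all `i`) iff `d = Ψ(c)` satisfies `d_i = d_{n+i}` for all
`0 ≤ i ≤ n−1`.  Consequently, for an `𝔽_q`-linear additive conjucyclic code `C` with
`D = Ψ(C)`, the image `Ψ(H(C))` of the largest `q`-ary cyclic code
`H(C) = {c ∈ C : c_i^q = c_i ∀ i}` contained in `C` is exactly the set of codewords
`d ∈ D` with `d_i = d_{n+i}` for all `0 ≤ i ≤ n−1`. -/
theorem stmt11 (q n : ℕ) (hn : 0 < n) {K F : Type*} [Field K] [Fintype K] [Field F] [Fintype F]
    [Algebra K F] (hK : Fintype.card K = q) (hF : Fintype.card F = q ^ 2)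
    (β : F) (hβ : ∀ x : F, x ≠ 0 → ∃ k : ℕ, x = β ^ k)
    (Tr : F → K) (hTr : ∀ x : F, algebraMap K F (Tr x) = x + x ^ q)
    (C : Submodule K (Fin n → F)) (hC : ∀ c ∈ C, Tshift q n c ∈ C) :
    (∀ c : Fin n → F,
      (∀ i, (c i) ^ q = c i) ↔
        ∀ i : Fin n,
          Psi q n Tr β c ⟨(i : ℕ), by have := i.isLt; omega⟩ =
          Psi q n Tr β c ⟨n + (i : ℕ), by have := i.isLt; omega⟩) ∧
    Psi q n Tr β '' {c : Fin n → F | c ∈ C ∧ ∀ i, (c i) ^ q = c i} =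
      {d : Fin (2 * n) → K | d ∈ Psi q n Tr β '' (C : Set (Fin n → F)) ∧
        ∀ i : Fin n,
          d ⟨(i : ℕ), by have := i.isLt; omega⟩ =
          d ⟨n + (i : ℕ), by have := i.isLt; omega⟩} := by

  have hne : β ^ q ≠ β := beta_pow_ne q hK hF β hβ
  have hpow : β ^ q ^ 2 = β := by
    conv_rhs => rw [← FiniteField.pow_card β]
    rw [hF]
  have hqq : (β ^ q) ^ q = β := by
    rw [← pow_mul, show q * q = q ^ 2 by ring, hpow]
  have hinj : Function.Injective (algebraMap K F) := (algebraMap K F).injective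
  have hmain : ∀ x : F, Tr (β * x) = Tr (β ^ q * x) ↔ x ^ q = x := by
    intro x
    constructor
    · intro h
      have h2 := congrArg (algebraMap K F) h
      rw [hTr, hTr, mul_pow, mul_pow, hqq] at h2
      have h3 : (β - β ^ q) * (x - x ^ q) = 0 := by linear_combination h2
      rcases mul_eq_zero.1 h3 with h4 | h4
      · exact absurd (sub_eq_zero.1 h4).symm hne
      · exact (sub_eq_zero.1 h4).symm
    · intro h
      apply hinj
      rw [hTr, hTr, mul_pow, mul_pow, hqq, h]
      ring
  have part1 : ∀ c : Fin n → F,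
      (∀ i, (c i) ^ q = c i) ↔
        ∀ i : Fin n,
          Psi q n Tr β c ⟨(i : ℕ), by have := i.isLt; omega⟩ =
          Psi q n Tr β c ⟨n + (i : ℕ), by have := i.isLt; omega⟩ := by
    intro c
    constructor
    · intro h i
      rw [Psi_left, Psi_right]
      exact (hmain (c i)).2 (h i)
    · intro h i
      have := h i
      rw [Psi_left, Psi_right] at this
      exact (hmain (c i)).1 this
  refine ⟨part1, ?_⟩
  ext d
  constructor
  · rintro ⟨c, ⟨hc, hcq⟩, rfl⟩
    exact ⟨⟨c, hc, rfl⟩, (part1 c).1 hcq⟩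
  · rintro ⟨⟨c, hc, rfl⟩, hd⟩
    exact ⟨c, ⟨hc, (part1 c).2 hd⟩, rfl⟩
end

section
/- Let g be a monic divisor of x^{2n} − 1 in K[x] of degree k with 0 ≤ k ≤ 2n − 1, let D ⊆ K^{2n} be the cyclic code corresponding to the ideal ⟨g⟩ of K[x]/⟨x^{2n} − 1⟩ (i.e. D = {(v_0,…,v_{2n−1}) ∈ K^{2n} : the class of v_0 + v_1 x + ⋯ + v_{2n−1}x^{2n−1} lies in the ideal generated by g}), and let V_g ∈ K^{2n} be the coefficient vector of g. Then the additive conjucyclic code C = Ψ^{-1}(D) ⊆ F^n equals the K-linear span of the 2n − k vectors T^i(Ψ^{-1}(V_g)) for 0 ≤ i ≤ 2n − k − 1; in particular these vectors form a K-basis of C (an additive generator matrix of C). -/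
open Polynomial

/-- The coefficient vector in `K^m` of a polynomial `g ∈ K[x]`. -/
def coeffVec (m : ℕ) {K : Type*} [Field K] (g : K[X]) : Fin m → K :=
  fun i => g.coeff (i : ℕ)

/-- The cyclic code of length `m` corresponding to the ideal `⟨g⟩` of `K[x]/⟨x^m − 1⟩`:
all vectors `(v₀,…,v_{m−1}) ∈ K^m` such that the class of `v₀ + v₁x + ⋯ + v_{m−1}x^{m−1}`
lies in the ideal generated by (the class of) `g`. -/
def cyclicCodeOf (m : ℕ) {K : Type*} [Field K] (g : K[X]) : Set (Fin m → K) :=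
  {v | Ideal.Quotient.mk (Ideal.span {(X : K[X]) ^ m - 1})
        (∑ i : Fin m, Polynomial.C (v i) * X ^ (i : ℕ)) ∈
      Ideal.span {Ideal.Quotient.mk (Ideal.span {(X : K[X]) ^ m - 1}) g}}

/-!
`Ψ` is a `K`-linear bijection `F^n → K^{2n}`: coordinatewise, `Tr(βx) = Tr(β̄x) = 0` forces
`(β̄² − β²) x̄ = 0`, and `β̄² ≠ β²` because the generator `β` has order `q² − 1 > 2(q − 1)`.
Since `Tr` is invariant under conjugation, `Tr(βc̄) = Tr(β̄c)`, so `Ψ ∘ T` is the cyclic shift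
composed with `Ψ`. Hence `Ψ` maps `T^i(Ψ⁻¹ V_g)` to the coefficient vector of `x^i g`, and
`C = Ψ⁻¹(D)` onto `D`, which is the image of the injective encoder `c(x) ↦ c(x) g(x)` on
polynomials of degree `< 2n − k`.
-/

section CyclicCode

variable {K : Type*} [Field K] {m k : ℕ} {g : K[X]}

variable (K) in
noncomputable def vecToPoly (m : ℕ) : (Fin m → K) →ₗ[K] K[X] :=
  (degreeLT K m).subtype ∘ₗ (degreeLTEquiv K m).symm.toLinearMap

lemma vecToPoly_mem_degreeLT (v : Fin m → K) : vecToPoly K m v ∈ degreeLT K m :=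
  Subtype.prop _

lemma coeffVec_vecToPoly (v : Fin m → K) : coeffVec m (vecToPoly K m v) = v :=
  (degreeLTEquiv K m).apply_symm_apply v

lemma vecToPoly_coeffVec {p : K[X]} (hp : p ∈ degreeLT K m) : vecToPoly K m (coeffVec m p) = p :=
  congrArg Subtype.val ((degreeLTEquiv K m).symm_apply_apply ⟨p, hp⟩)

lemma vecToPoly_single (i : Fin m) : vecToPoly K m (Pi.single i 1) = X ^ (i : ℕ) := by
  simpa [vecToPoly, degreeLT.basis] using degreeLT.basis_val (R := K) i

lemma vecToPoly_apply (v : Fin m → K) :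
    vecToPoly K m v = ∑ i : Fin m, C (v i) * X ^ (i : ℕ) := by
  simp [vecToPoly, degreeLTEquiv, C_mul_X_pow_eq_monomial]

lemma mem_cyclicCodeOf_iff (hdvd : g ∣ X ^ m - 1) (v : Fin m → K) :
    v ∈ cyclicCodeOf m g ↔ g ∣ vecToPoly K m v := by
  have hle : Ideal.span {(X : K[X]) ^ m - 1} ≤ Ideal.span {g} :=
    Ideal.span_singleton_le_span_singleton.mpr hdvd
  have hmap : Ideal.span {Ideal.Quotient.mk (Ideal.span {(X : K[X]) ^ m - 1}) g} =
      (Ideal.span {g}).map (Ideal.Quotient.mk _) := by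
    rw [Ideal.map_span, Set.image_singleton]
  rw [cyclicCodeOf, Set.mem_ofPred_eq, hmap, Ideal.mem_quotient_iff_mem_sup,
    sup_eq_left.mpr hle, Ideal.mem_span_singleton, vecToPoly_apply]

lemma mul_mem_degreeLT {p : K[X]} (hp : p ∈ degreeLT K (m - k)) (hdeg : g.natDegree ≤ k)
    (hk : k ≤ m) : p * g ∈ degreeLT K m := by
  rw [mem_degreeLT] at hp ⊢
  rcases eq_or_ne p 0 with rfl | hp0
  · simp
  rw [degree_eq_natDegree hp0] at hp
  have := natDegree_mul_le (p := p) (q := g)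
  refine degree_le_natDegree.trans_lt ?_
  norm_cast at hp ⊢
  omega

lemma mem_degreeLT_of_mul_mem {p : K[X]} (hg : g ≠ 0) (hdeg : k ≤ g.natDegree)
    (hp : g * p ∈ degreeLT K m) : p ∈ degreeLT K (m - k) := by
  rw [mem_degreeLT] at hp ⊢
  rcases eq_or_ne p 0 with rfl | hp0
  · simp
  rw [degree_mul, degree_eq_natDegree hg, degree_eq_natDegree hp0] at hp
  rw [degree_eq_natDegree hp0]
  norm_cast at hp ⊢
  omega

variable (m k g) in
noncomputable def cyclicEncoder : (Fin (m - k) → K) →ₗ[K] (Fin m → K) :=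
  LinearMap.pi (fun i : Fin m => lcoeff K (i : ℕ)) ∘ₗ LinearMap.mulRight K g ∘ₗ
    vecToPoly K (m - k)

lemma cyclicEncoder_apply (c : Fin (m - k) → K) :
    cyclicEncoder m k g c = coeffVec m (vecToPoly K (m - k) c * g) :=
  rfl

lemma cyclicEncoder_injective (hg : g ≠ 0) (hdeg : g.natDegree = k) (hk : k ≤ m) :
    Function.Injective (cyclicEncoder m k g) := by
  rw [← LinearMap.ker_eq_bot, LinearMap.ker_eq_bot']
  intro c hc
  rw [cyclicEncoder_apply] at hc
  have hmul : vecToPoly K (m - k) c * g = 0 := by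
    rw [← vecToPoly_coeffVec (mul_mem_degreeLT (vecToPoly_mem_degreeLT c) hdeg.le hk), hc,
      map_zero]
  rw [← coeffVec_vecToPoly c, (mul_eq_zero.mp hmul).resolve_right hg]
  rfl

lemma range_cyclicEncoder (hg : g ≠ 0) (hdvd : g ∣ X ^ m - 1) (hdeg : g.natDegree = k)
    (hk : k ≤ m) :
    (LinearMap.range (cyclicEncoder m k g) : Set (Fin m → K)) = cyclicCodeOf m g := by
  ext v
  rw [SetLike.mem_coe, LinearMap.mem_range, mem_cyclicCodeOf_iff hdvd]
  constructor
  · rintro ⟨c, rfl⟩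
    rw [cyclicEncoder_apply,
      vecToPoly_coeffVec (mul_mem_degreeLT (vecToPoly_mem_degreeLT c) hdeg.le hk)]
    exact dvd_mul_left g _
  · rintro ⟨p, hp⟩
    have hpdeg : p ∈ degreeLT K (m - k) :=
      mem_degreeLT_of_mul_mem hg hdeg.ge (hp ▸ vecToPoly_mem_degreeLT v)
    refine ⟨coeffVec (m - k) p, ?_⟩
    rw [cyclicEncoder_apply, vecToPoly_coeffVec hpdeg, mul_comm, ← hp, coeffVec_vecToPoly]

lemma cyclicEncoder_single (i : Fin (m - k)) :
    cyclicEncoder m k g (Pi.single i 1) = coeffVec m (X ^ (i : ℕ) * g) := by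
  rw [cyclicEncoder_apply, vecToPoly_single]

end CyclicCode

section InjectiveLinearMap

variable {R M ι : Type*} [Semiring R] [AddCommMonoid M] [Module R M] [Fintype ι] [DecidableEq ι]

lemma LinearMap.span_range_apply_single (φ : (ι → R) →ₗ[R] M) :
    Submodule.span R (Set.range fun i => φ (Pi.single i 1)) = LinearMap.range φ := by
  rw [LinearMap.range_eq_map, ← (Pi.basisFun R ι).span_eq, Submodule.map_span,
    ← Set.range_comp]
  simp only [Function.comp_def, Pi.basisFun_apply]

lemma LinearMap.linearIndependent_apply_single {φ : (ι → R) →ₗ[R] M}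
    (hφ : Function.Injective φ) : LinearIndependent R fun i => φ (Pi.single i 1) := by
  simpa only [Function.comp_def, Pi.basisFun_apply] using
    (Pi.basisFun R ι).linearIndependent.map_injOn φ hφ.injOn

end InjectiveLinearMap

def cyclicShift {α : Type*} {m : ℕ} (v : Fin m → α) : Fin m → α :=
  fun i => if _h : (i : ℕ) = 0 then v ⟨m - 1, by omega⟩ else v ⟨(i : ℕ) - 1, by omega⟩

section Shift
variable {K : Type*} [Field K] {m : ℕ}

lemma coeffVec_X_mul {p : K[X]} (hp : p.coeff (m - 1) = 0) :
    coeffVec m (X * p) = cyclicShift (coeffVec m p) := by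
  funext ⟨j, hj⟩
  simp only [cyclicShift, coeffVec]
  split_ifs with h
  · simp [h, hp]
  · obtain ⟨j, rfl⟩ := Nat.exists_eq_add_one_of_ne_zero h
    simp [coeff_X_mul]

lemma cyclicShift_iterate_coeffVec {g : K[X]} {i : ℕ} (hi : g.natDegree + i < m) :
    cyclicShift^[i] (coeffVec m g) = coeffVec m (X ^ i * g) := by
  induction i with
  | zero => simp
  | succ i ih =>
    have hcoeff : (X ^ i * g).coeff (m - 1) = 0 := by
      refine coeff_eq_zero_of_natDegree_lt ((natDegree_mul_le).trans_lt ?_)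
      rw [natDegree_X_pow]
      omega
    rw [Function.iterate_succ_apply', ih (by omega), ← coeffVec_X_mul hcoeff, pow_succ',
      mul_assoc]

end Shift

section Generator
variable {F : Type*} [Field F] [Fintype F]

lemma card_le_succ_of_forall_pow_eq_one {d : ℕ} (hd : 0 < d)
    (h : ∀ x : F, x ≠ 0 → x ^ d = 1) : Fintype.card F ≤ d + 1 := by
  classical
  have hsub : Finset.univ.erase (0 : F) ⊆ nthRootsFinset d (1 : F) := fun x hx =>
    (mem_nthRootsFinset hd 1).mpr (h x (Finset.ne_of_mem_erase hx))
  have hroots : (nthRootsFinset d (1 : F)).card ≤ d :=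
    (Multiset.toFinset_card_le _).trans (card_nthRoots _ _)
  have := (Finset.card_le_card hsub).trans hroots
  rw [Finset.card_erase_of_mem (Finset.mem_univ _), Finset.card_univ] at this
  omega

lemma ne_zero_of_forall_eq_pow {β : F} (hβ : ∀ x : F, x ≠ 0 → ∃ j : ℕ, x = β ^ j)
    (hF : 2 < Fintype.card F) : β ≠ 0 := by
  rintro rfl
  have : Fintype.card F ≤ 1 + 1 := card_le_succ_of_forall_pow_eq_one one_pos fun x hx => by
    obtain ⟨j, rfl⟩ := hβ x hx
    cases j <;> simp_all
  omega

lemma pow_mul_pow_ne_mul_self {β : F} {q : ℕ}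
    (hβ : ∀ x : F, x ≠ 0 → ∃ j : ℕ, x = β ^ j)
    (hq : 2 ≤ q) (hF : Fintype.card F = q ^ 2) : β ^ q * β ^ q ≠ β * β := by
  intro h
  have hβ0 : β ≠ 0 := ne_zero_of_forall_eq_pow hβ (by rw [hF]; nlinarith)
  have hpow : β ^ (2 * q - 2) = 1 := by
    refine mul_right_cancel₀ (mul_ne_zero hβ0 hβ0) ?_
    calc β ^ (2 * q - 2) * (β * β) = β ^ q * β ^ q := by
          rw [← pow_two, ← pow_add, ← pow_add]
          congr 1
          omega
      _ = 1 * (β * β) := by rw [h, one_mul]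
  have := card_le_succ_of_forall_pow_eq_one (d := 2 * q - 2) (by omega) fun x hx => by
    obtain ⟨j, rfl⟩ := hβ x hx
    rw [← pow_mul, mul_comm, pow_mul, hpow, one_pow]
  rw [hF] at this
  nlinarith [Nat.sub_add_cancel (show 2 ≤ 2 * q by omega)]

lemma pow_pow_eq_self_of_card_eq_sq {q : ℕ} (hF : Fintype.card F = q ^ 2) (x : F) :
    (x ^ q) ^ q = x := by
  rw [← pow_mul, ← sq, ← hF, FiniteField.pow_card]

end Generator

section Trace
variable {K F : Type*} [Field K] [Field F] {q n : ℕ} {Tr : F → K} {β : F}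

lemma tr_pow_eq_tr [Algebra K F] (hTr : ∀ x, algebraMap K F (Tr x) = x + x ^ q)
    (hinv : ∀ x : F, (x ^ q) ^ q = x) (x : F) : Tr (x ^ q) = Tr x :=
  (algebraMap K F).injective <| by rw [hTr, hTr, hinv, add_comm]

lemma Psi_Tshift_s13 (hTr : ∀ x, Tr (x ^ q) = Tr x) (hβ : (β ^ q) ^ q = β) (c : Fin n → F) :
    Psi q n Tr β (Tshift q n c) = cyclicShift (Psi q n Tr β c) := by
  have h1 : ∀ x, Tr (β * x ^ q) = Tr (β ^ q * x) := fun x => by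
    rw [← hTr (β ^ q * x), mul_pow, hβ]
  have h2 : ∀ x, Tr (β ^ q * x ^ q) = Tr (β * x) := fun x => by
    rw [← mul_pow, hTr]
  funext ⟨j, hj⟩
  simp only [Psi, Tshift, cyclicShift]
  -- Both sides read the same coordinate of `c`; at positions `0` and `n` the conjugation
  -- introduced by `T` is absorbed by `h1` and `h2`.
  split_ifs <;> first
    | omega
    | rfl
    | (rw [h1]; congr 3; simp only [Fin.mk.injEq]; omega)
    | (rw [h2]; congr 3; simp only [Fin.mk.injEq]; omega)
    | (congr 3; simp only [Fin.mk.injEq]; omega)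

lemma eq_zero_of_tr_mul_eq_zero [Algebra K F] (hTr : ∀ x, algebraMap K F (Tr x) = x + x ^ q)
    (hβq : (β ^ q) ^ q = β) (hβ : β ^ q * β ^ q ≠ β * β) {x : F}
    (h1 : Tr (β * x) = 0) (h2 : Tr (β ^ q * x) = 0) : x = 0 := by
  have e1 : β * x + β ^ q * x ^ q = 0 := by rw [← mul_pow, ← hTr, h1, map_zero]
  have e2 : β ^ q * x + β * x ^ q = 0 := by
    rw [← hβq, ← mul_pow, hβq, ← hTr, h2, map_zero]
  have e3 : (β ^ q * β ^ q - β * β) * x ^ q = 0 := by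
    linear_combination β ^ q * e1 - β * e2
  exact eq_zero_of_pow_eq_zero ((mul_eq_zero.mp e3).resolve_left (sub_ne_zero.mpr hβ))

end Trace

section PsiLinearMap
variable {K F : Type*} [Field K] [Fintype K] [Field F] [Algebra K F] {Tr : F → K}

lemma tr_add (hTr : ∀ x, algebraMap K F (Tr x) = x + x ^ Fintype.card K) (x y : F) :
    Tr (x + y) = Tr x + Tr y :=
  (algebraMap K F).injective <| by
    have hfrob := map_add (FiniteField.frobeniusAlgHom K F) x y
    simp only [FiniteField.frobeniusAlgHom_apply] at hfrob
    rw [map_add, hTr, hTr, hTr, hfrob]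
    ring

lemma tr_smul (hTr : ∀ x, algebraMap K F (Tr x) = x + x ^ Fintype.card K) (c : K) (x : F) :
    Tr (c • x) = c • Tr x :=
  (algebraMap K F).injective <| by
    have hfrob := map_smul (FiniteField.frobeniusAlgHom K F) c x
    simp only [FiniteField.frobeniusAlgHom_apply] at hfrob
    rw [smul_eq_mul, map_mul, hTr, hTr, ← Algebra.smul_def, hfrob, smul_add]

variable (n : ℕ) (β : F) in
def psiLinearMap (hTr : ∀ x, algebraMap K F (Tr x) = x + x ^ Fintype.card K) :
    (Fin n → F) →ₗ[K] (Fin (2 * n) → K) where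
  toFun := Psi (Fintype.card K) n Tr β
  map_add' a b := by
    funext i
    simp only [Psi, Pi.add_apply]
    split_ifs <;> rw [mul_add, tr_add hTr]
  map_smul' c a := by
    funext i
    simp only [Psi, Pi.smul_apply, mul_smul_comm, RingHom.id_apply]
    split_ifs <;> rw [tr_smul hTr]

lemma psiLinearMap_bijective [Fintype F] {n : ℕ} {β : F}
    (hTr : ∀ x, algebraMap K F (Tr x) = x + x ^ Fintype.card K)
    (hF : Fintype.card F = Fintype.card K ^ 2)
    (hβ : ∀ x : F, x ≠ 0 → ∃ j : ℕ, x = β ^ j) :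
    Function.Bijective (psiLinearMap n β hTr) := by
  have hinj : Function.Injective (psiLinearMap n β hTr) := by
    have hβ2 := pow_mul_pow_ne_mul_self hβ Fintype.one_lt_card hF
    rw [← LinearMap.ker_eq_bot, LinearMap.ker_eq_bot']
    intro a ha
    funext j
    refine eq_zero_of_tr_mul_eq_zero hTr (pow_pow_eq_self_of_card_eq_sq hF β) hβ2 ?_ ?_
    · simpa [psiLinearMap, Psi] using congrFun ha ⟨j, by omega⟩
    · simpa [psiLinearMap, Psi] using congrFun ha ⟨n + j, by omega⟩
  refine (Fintype.bijective_iff_injective_and_card _).mpr ⟨hinj, ?_⟩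
  simp [hF, pow_mul]

end PsiLinearMap

theorem stmt13_general (q n k : ℕ) {K F : Type*} [Field K] [Fintype K] [Field F]
    [Fintype F] [Algebra K F]
    (hK : Fintype.card K = q) (hF : Fintype.card F = q ^ 2)
    (β : F) (hβ : ∀ x : F, x ≠ 0 → ∃ j : ℕ, x = β ^ j)
    (Tr : F → K) (hTr : ∀ x : F, algebraMap K F (Tr x) = x + x ^ q)
    (g : K[X]) (hg : g.Monic) (hdvd : g ∣ X ^ (2 * n) - 1)
    (hdeg : g.natDegree = k) (hk : k ≤ 2 * n - 1) :
    Psi q n Tr β ⁻¹' cyclicCodeOf (2 * n) g =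
      (Submodule.span K (Set.range fun i : Fin (2 * n - k) =>
          (Tshift q n)^[(i : ℕ)]
            (Function.invFun (Psi q n Tr β) (coeffVec (2 * n) g))) : Set (Fin n → F)) ∧
    LinearIndependent K (fun i : Fin (2 * n - k) =>
      (Tshift q n)^[(i : ℕ)]
        (Function.invFun (Psi q n Tr β) (coeffVec (2 * n) g))) := by
  subst hK
  set q := Fintype.card K
  have hinv := pow_pow_eq_self_of_card_eq_sq hF
  let e := LinearEquiv.ofBijective (psiLinearMap n β hTr) (psiLinearMap_bijective hTr hF hβ)
  have hsymm : Function.invFun (Psi q n Tr β) = e.symm :=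
    Function.invFun_eq_of_injective_of_rightInverse e.injective e.apply_symm_apply
  have hshift : Function.Semiconj e.symm cyclicShift (Tshift q n) :=
    Function.Semiconj.inverse_left (f := e) (Psi_Tshift_s13 (tr_pow_eq_tr hTr hinv) (hinv β))
      e.symm_apply_apply e.apply_symm_apply
  have hgen : ∀ i : Fin (2 * n - k), (Tshift q n)^[(i : ℕ)] (e.symm (coeffVec (2 * n) g)) =
      (e.symm.toLinearMap ∘ₗ cyclicEncoder (2 * n) k g) (Pi.single i 1) := fun i => by
    rw [← (hshift.iterate_right i).eq, cyclicShift_iterate_coeffVec (by omega),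
      LinearMap.comp_apply, cyclicEncoder_single, LinearEquiv.coe_coe]
  simp_rw [hsymm, hgen]
  refine ⟨?_, LinearMap.linearIndependent_apply_single
    (e.symm.injective.comp (cyclicEncoder_injective hg.ne_zero hdeg (by omega)))⟩
  ext x
  rw [LinearMap.span_range_apply_single, ← range_cyclicEncoder hg.ne_zero hdvd hdeg (by omega)]
  simp only [Set.mem_preimage, SetLike.mem_coe, LinearMap.mem_range, LinearMap.comp_apply,
    LinearEquiv.coe_coe, e.symm_apply_eq]
  rfl

/-- Let `g` be a monic divisor of `x^{2n} − 1` in `K[x]` of degree `k` with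
`0 ≤ k ≤ 2n − 1`, `D ⊆ K^{2n}` the cyclic code corresponding to `⟨g⟩`, and `V_g ∈ K^{2n}`
the coefficient vector of `g`.  Then the additive conjucyclic code `C = Ψ⁻¹(D) ⊆ F^n`
equals the `K`-linear span of the `2n − k` vectors `T^i(Ψ⁻¹(V_g))`, `0 ≤ i ≤ 2n − k − 1`,
and these vectors are `K`-linearly independent (so they form a `K`-basis of `C`). -/
theorem stmt13 (q n k : ℕ) (hn : 0 < n) {K F : Type*} [Field K] [Fintype K] [Field F]
    [Fintype F] [Algebra K F]
    (hK : Fintype.card K = q) (hF : Fintype.card F = q ^ 2)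
    (β : F) (hβ : ∀ x : F, x ≠ 0 → ∃ j : ℕ, x = β ^ j)
    (Tr : F → K) (hTr : ∀ x : F, algebraMap K F (Tr x) = x + x ^ q)
    (g : K[X]) (hg : g.Monic) (hdvd : g ∣ X ^ (2 * n) - 1)
    (hdeg : g.natDegree = k) (hk : k ≤ 2 * n - 1) :
    Psi q n Tr β ⁻¹' cyclicCodeOf (2 * n) g =
      (Submodule.span K (Set.range fun i : Fin (2 * n - k) =>
          (Tshift q n)^[(i : ℕ)]
            (Function.invFun (Psi q n Tr β) (coeffVec (2 * n) g))) : Set (Fin n → F)) ∧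
    LinearIndependent K (fun i : Fin (2 * n - k) =>
      (Tshift q n)^[(i : ℕ)]
        (Function.invFun (Psi q n Tr β) (coeffVec (2 * n) g))) :=
  stmt13_general q n k hK hF β hβ Tr hTr g hg hdvd hdeg hk
end

section
/- Assume the characteristic of F is 2. If C ⊆ F^n is an 𝔽_q-linear additive conjucyclic code, then its alternating dual C^{⊥_a} is also an 𝔽_q-linear additive conjucyclic code, i.e. C^{⊥_a} is a K-linear subspace with T(C^{⊥_a}) ⊆ C^{⊥_a}. -/
/-- The alternating inner product on `F^n`:
`⟨u,v⟩_a = (β̄² − β²) Σ_{i=0}^{n−1} (u_i v̄_i − ū_i v_i)`, where `x̄ = x^q`. -/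
def altInner (q n : ℕ) {F : Type*} [Field F] (β : F) (u v : Fin n → F) : F :=
  ((β ^ q) ^ 2 - β ^ 2) * ∑ i : Fin n, (u i * (v i) ^ q - (u i) ^ q * v i)

open Function Set

theorem mapsTo_orthogonal_of_injective {α M : Type*} [Zero M] {B : α → α → M} {T : α → α}
    {C : Set α} (hC : C.Finite) (hT : Injective T) (hB : ∀ u v, B (T u) (T v) = B u v)
    (hTC : MapsTo T C C) :
    MapsTo T {v | ∀ u ∈ C, B u v = 0} {v | ∀ u ∈ C, B u v = 0} := by
  intro v hv u hu
  obtain ⟨w, hw, rfl⟩ := ((hC.injOn_iff_bijOn_of_mapsTo hTC).mp hT.injOn).surjOn hu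
  rw [hB]
  exact hv w hw

section AltDual

variable {K F : Type*} [Field K] [Fintype K] [Field F] [Algebra K F] {n : ℕ}

def altInnerRight (β : F) (u : Fin n → F) : (Fin n → F) →ₗ[K] F where
  toFun := altInner (Fintype.card K) n β u
  map_add' v w := by
    simp only [altInner, ← FiniteField.frobeniusAlgHom_apply K, Pi.add_apply, map_add,
      ← mul_add, ← Finset.sum_add_distrib]
    congr 1
    exact Finset.sum_congr rfl fun i _ => by ring
  map_smul' k v := by
    simp only [altInner, ← FiniteField.frobeniusAlgHom_apply K, Pi.smul_apply, Algebra.smul_def,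
      map_mul, AlgHom.commutes, RingHom.id_apply, Finset.mul_sum]
    exact Finset.sum_congr rfl fun i _ => by ring

def altDual (β : F) (C : Set (Fin n → F)) : Submodule K (Fin n → F) :=
  ⨅ u ∈ C, LinearMap.ker (altInnerRight (K := K) β u)

theorem coe_altDual (β : F) (C : Set (Fin n → F)) :
    (altDual (K := K) β C : Set (Fin n → F)) =
      {v | ∀ u ∈ C, altInner (Fintype.card K) n β u v = 0} := by
  ext v
  simp [altDual, altInnerRight]

end AltDual

section Tshift

variable {F : Type*} [Field F] {q : ℕ}

theorem Tshift_succ {n : ℕ} (c : Fin (n + 1) → F) :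
    Tshift q (n + 1) c = Fin.cons (c (Fin.last n) ^ q) (Fin.init c) := by
  ext i
  cases i using Fin.cases <;> rfl

theorem Tshift_injective (hq : Injective (· ^ q : F → F)) (n : ℕ) :
    Injective (Tshift q n : (Fin n → F) → Fin n → F) := by
  cases n with
  | zero => exact injective_of_subsingleton _
  | succ n =>
    intro c d h
    rw [Tshift_succ, Tshift_succ, Fin.cons_inj] at h
    rw [← Fin.snoc_init_self c, ← Fin.snoc_init_self d, hq h.1, h.2]

theorem altInner_Tshift [CharP F 2] (hq : Involutive (· ^ q : F → F)) (n : ℕ) (β : F)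
    (u v : Fin n → F) :
    altInner q n β (Tshift q n u) (Tshift q n v) = altInner q n β u v := by
  cases n with
  | zero => simp [altInner]
  | succ n =>
    simp only [altInner, Tshift_succ]
    congr 1
    rw [Fin.sum_univ_succ, Fin.sum_univ_castSucc]
    simp only [Fin.cons_zero, Fin.cons_succ, Fin.init, hq _]
    rw [add_comm, ← CharTwo.neg_eq (_ - _)]
    ring

end Tshift

theorem stmt17_general (q n : ℕ) {K F : Type*} [Field K] [Fintype K] [Field F]
    [Fintype F] [Algebra K F] (hchar : ringChar F = 2)
    (hK : Fintype.card K = q) (hF : Fintype.card F = q ^ 2)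
    (β : F)
    (C : Submodule K (Fin n → F)) (hC : ∀ c ∈ C, Tshift q n c ∈ C) :
    ∃ S : Submodule K (Fin n → F),
      (S : Set (Fin n → F)) = {v : Fin n → F | ∀ u ∈ C, altInner q n β u v = 0} ∧
      ∀ v ∈ S, Tshift q n v ∈ S := by
  subst hK
  have : CharP F 2 := ringChar.of_eq hchar
  have hq : Involutive (· ^ Fintype.card K : F → F) := fun x => by
    change (x ^ _) ^ _ = x
    rw [← pow_mul, ← sq, ← hF, FiniteField.pow_card]
  have hS := coe_altDual (K := K) β (C : Set (Fin n → F))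
  refine ⟨altDual β C, hS, ?_⟩
  have := mapsTo_orthogonal_of_injective (toFinite (C : Set (Fin n → F)))
    (Tshift_injective hq.injective n) (altInner_Tshift hq n β) fun c hc => hC c hc
  rwa [← hS] at this

/-- Assume `char F = 2`.  If `C ⊆ F^n` is an `𝔽_q`-linear additive
conjucyclic code (a `K`-subspace with `T(C) ⊆ C`), then its alternating dual `C^{⊥_a}` is
also an `𝔽_q`-linear additive conjucyclic code: it is a `K`-linear subspace of `F^n` with
`T(C^{⊥_a}) ⊆ C^{⊥_a}`. -/
theorem stmt17 (q n : ℕ) (hn : 0 < n) {K F : Type*} [Field K] [Fintype K] [Field F]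
    [Fintype F] [Algebra K F] (hchar : ringChar F = 2)
    (hK : Fintype.card K = q) (hF : Fintype.card F = q ^ 2)
    (β : F) (hβ : ∀ x : F, x ≠ 0 → ∃ j : ℕ, x = β ^ j)
    (C : Submodule K (Fin n → F)) (hC : ∀ c ∈ C, Tshift q n c ∈ C) :
    ∃ S : Submodule K (Fin n → F),
      (S : Set (Fin n → F)) = {v : Fin n → F | ∀ u ∈ C, altInner q n β u v = 0} ∧
      ∀ v ∈ S, Tshift q n v ∈ S :=
  stmt17_general q n hchar hK hF β C hC
end
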